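/- Twisted action computation: with ρ and the dot action as above, (w⁻)⁻¹ · (d e₀ + μ) = (μ₁-1) e₀ + ⋯ + (μ_{n-1}-1) e_{n-2} + (-μ_n - 1) e_{n-1} - (d+n) e_n. -/

import Mathlib

/-- `(w⁻)⁻¹`: `e_{i+1} ↦ e_i` for `0 ≤ i ≤ n-2`, `e_n ↦ -e_{n-1}`, `e₀ ↦ -e_n`,
acting on `ℤ^{n+1}`. -/
def winvMinus (n : ℕ) : (Fin (n+1) → ℤ) → (Fin (n+1) → ℤ) :=
  fun v j => if h : (j : ℕ) = n then -(v 0)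
    else if h2 : (j : ℕ) = n - 1 then -(v (Fin.last n))
    else v ⟨(j : ℕ) + 1, by have := j.isLt; omega⟩

/-- `ρ = Σ_{j=0}^{n} (n-j) e_j`. -/
def rhoZ (n : ℕ) : Fin (n+1) → ℤ := fun j => (n : ℤ) - (j : ℕ)

/-- The weight `d e₀ + Σ_{j=1}^n μ_j e_j` as a vector in `ℤ^{n+1}`. -/
def lamvec (n : ℕ) (d : ℤ) (μ : Fin n → ℤ) : Fin (n+1) → ℤ :=
  fun i => if h : (i : ℕ) = 0 then d
    else μ ⟨(i : ℕ) - 1, by have := i.isLt; omega⟩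

theorem winvMinus_add (n : ℕ) (v w : Fin (n+1) → ℤ) :
    winvMinus n (v + w) = winvMinus n v + winvMinus n w := by
  funext j
  simp only [winvMinus, Pi.add_apply]
  split_ifs <;> ring

theorem winvMinus_rhoZ_sub_rhoZ (n : ℕ) :
    winvMinus n (rhoZ n) - rhoZ n =
      fun (j : Fin (n+1)) => if (j : ℕ) = n then -(n : ℤ) else -1 := by
  funext j
  have := j.isLt
  simp only [winvMinus, rhoZ, Pi.sub_apply, Fin.val_zero, Fin.val_last]
  split_ifs <;> omega

theorem winvMinus_lamvec (n : ℕ) (d : ℤ) (μ : Fin n → ℤ) :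
    winvMinus n (lamvec n d μ) = fun (j : Fin (n+1)) => if h : (j : ℕ) = n then -d
      else if (j : ℕ) = n - 1 then -(μ ⟨n - 1, by omega⟩)
      else μ ⟨(j : ℕ), by have := j.isLt; omega⟩ := by
  funext j
  have := j.isLt
  simp only [winvMinus, lamvec, Fin.val_zero, Fin.val_last]
  split_ifs <;> first | rfl | contradiction | omega

theorem stmt12 (n : ℕ) (d : ℤ) (μ : Fin n → ℤ) :
    winvMinus n (lamvec n d μ + rhoZ n) - rhoZ n =
      fun (j : Fin (n+1)) => if h : (j : ℕ) = n then -(d + n)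
        else if h2 : (j : ℕ) = n - 1 then -(μ ⟨n - 1, by omega⟩) - 1
        else μ ⟨(j : ℕ), by have := j.isLt; omega⟩ - 1 := by
  rw [winvMinus_add, add_sub_assoc, winvMinus_rhoZ_sub_rhoZ, winvMinus_lamvec]
  funext j
  simp only [Pi.add_apply]
  split_ifs <;> ring
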